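/- arXiv:2501.17301 — 4 statements merged into one kernel-verified Lean document; each statement's English description precedes it below -/
import Mathlib

section
/- The IMEX Runge–Kutta pair IMEX-NPRK2[42]b satisfies the conditions for second-order accuracy of the additively partitioned method: with b = ((16+9√2)/94, (78−9√2)/94), implicit abscissae c = A·𝟙 = (γ, (11+√2)/21) and explicit abscissae c̃ = Ã·𝟙 = (0, (26+3√2)/42), one has bᵀ𝟙 = 1, bᵀc = 1/2, and bᵀc̃ = 1/2, where γ = 1 − √2/2. -/
open Matrix

theorem stmt_3 :
    let g : ℝ := 1 - Real.sqrt 2 / 2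
    let A : Matrix (Fin 2) (Fin 2) ℝ := !![g, 0; (-20 + 23*Real.sqrt 2)/42, g]
    let Ae : Matrix (Fin 2) (Fin 2) ℝ := !![0, 0; (26 + 3*Real.sqrt 2)/42, 0]
    let b : Fin 2 → ℝ := ![(16 + 9*Real.sqrt 2)/94, (78 - 9*Real.sqrt 2)/94]
    let c : Fin 2 → ℝ := A *ᵥ 1
    let ct : Fin 2 → ℝ := Ae *ᵥ 1
    c = ![g, (11 + Real.sqrt 2)/21] ∧ ct = ![0, (26 + 3*Real.sqrt 2)/42] ∧
      b ⬝ᵥ (1 : Fin 2 → ℝ) = 1 ∧ b ⬝ᵥ c = 1/2 ∧ b ⬝ᵥ ct = 1/2 := by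
  have h2 : Real.sqrt 2 ^ 2 = 2 := Real.sq_sqrt (by norm_num)
  intro g A Ae b c ct
  refine ⟨?_, ?_, ?_, ?_, ?_⟩
  · funext i; fin_cases i <;>
      simp [c, A, g, mulVec, dotProduct, Fin.sum_univ_two] <;> ring
  · funext i; fin_cases i <;>
      simp [ct, Ae, mulVec, dotProduct, Fin.sum_univ_two]
  · simp [b, dotProduct, Fin.sum_univ_two]; ring
  · simp [b, c, A, g, mulVec, dotProduct, Fin.sum_univ_two]; nlinarith [h2]
  · simp [b, ct, Ae, mulVec, dotProduct, Fin.sum_univ_two]; nlinarith [h2]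
end

section
/- The implicit component of SSP-LDIRK2(3,3,2) is L-stable: with A = [[1/4,0,0],[0,1/4,0],[1/3,1/3,1/3]] and b = (1/3, 1/3, 1/3), for every z ∈ ℂ with Re z ≤ 0 the matrix I − zA is invertible and the stability function R(z) = 1 + z·bᵀ(I − zA)⁻¹𝟙 satisfies |R(z)| ≤ 1; moreover bᵀA⁻¹𝟙 = 1, so that R(z) → 0 as |z| → ∞. -/
/-!
The method is stiffly accurate: `b` is the last row of `A`. Hence `bᵀA⁻¹ = e₃ᵀ`, which gives
`bᵀA⁻¹𝟙 = 1`, and `R(z)` is the last component of the solution of `(I - zA)x = 𝟙`. As `I - zA` is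
lower triangular with determinant `(4 - z)²(3 - z)/48`, solving by forward substitution gives
`R(z) = (12 + 5z)/((4 - z)(3 - z))`. Its denominator dominates on the left half-plane because
`|(4 - z)(3 - z)|² - |12 + 5z|² = |z|⁴ - 14 Re z |z|² + 48 (Re z)² - 288 Re z`, a sum of nonnegative
terms when `Re z ≤ 0`; and `R(z) → 0` at infinity since the numerator has the lower degree.
-/

open Matrix Filter Topology Bornology

section StabilityFunction

variable {ι : Type*} [Fintype ι] [DecidableEq ι]

noncomputable def stabilityFunction (A : Matrix ι ι ℝ) (b : ι → ℝ) (z : ℂ) : ℂ :=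
  1 + z * ((fun i => (b i : ℂ)) ⬝ᵥ ((1 - z • A.map Complex.ofReal)⁻¹ *ᵥ 1))

theorem row_dotProduct_inv_mulVec {R : Type*} [CommRing R] {A : Matrix ι ι R}
    (hA : IsUnit A.det) (s : ι) (v : ι → R) : A s ⬝ᵥ (A⁻¹ *ᵥ v) = v s := by
  change (A *ᵥ (A⁻¹ *ᵥ v)) s = v s
  rw [mulVec_mulVec, mul_nonsing_inv _ hA, one_mulVec]

theorem stabilityFunction_row_eq {A : Matrix ι ι ℝ} (s : ι) {z : ℂ}
    (hz : IsUnit (1 - z • A.map Complex.ofReal).det) :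
    stabilityFunction A (A s) z = ((1 - z • A.map Complex.ofReal)⁻¹ *ᵥ 1) s := by
  set x := (1 - z • A.map Complex.ofReal)⁻¹ *ᵥ 1
  have hx : ((1 - z • A.map Complex.ofReal) *ᵥ x) s = 1 := by
    rw [mulVec_mulVec, mul_nonsing_inv _ hz, one_mulVec]; rfl
  have hrow : (A.map Complex.ofReal *ᵥ x) s = (fun i => (A s i : ℂ)) ⬝ᵥ x := rfl
  simp only [sub_mulVec, one_mulVec, smul_mulVec, Pi.sub_apply, Pi.smul_apply, smul_eq_mul,
    hrow] at hx
  rw [stabilityFunction]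
  linear_combination -hx

end StabilityFunction

noncomputable def ldirkA : Matrix (Fin 3) (Fin 3) ℝ := !![1/4, 0, 0; 0, 1/4, 0; 1/3, 1/3, 1/3]

noncomputable def ldirkR (z : ℂ) : ℂ := (12 + 5 * z) / ((4 - z) * (3 - z))

theorem isUnit_det_ldirkA : IsUnit ldirkA.det := by
  rw [isUnit_iff_ne_zero, det_fin_three]
  simp [ldirkA]

theorem det_one_sub_smul_ldirkA (z : ℂ) :
    (1 - z • ldirkA.map Complex.ofReal).det = (4 - z) ^ 2 * (3 - z) / 48 := by
  simp [det_fin_three, ldirkA]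
  ring

theorem one_sub_smul_ldirkA_mulVec {z : ℂ} (hz4 : z ≠ 4) (hz3 : z ≠ 3) :
    (1 - z • ldirkA.map Complex.ofReal) *ᵥ ![4 / (4 - z), 4 / (4 - z), ldirkR z] = 1 := by
  have h4 : (4 : ℂ) - z ≠ 0 := sub_ne_zero.mpr hz4.symm
  have h3 : (3 : ℂ) - z ≠ 0 := sub_ne_zero.mpr hz3.symm
  ext i
  fin_cases i <;> simp [ldirkA, ldirkR, mulVec, dotProduct, Fin.sum_univ_three] <;> field_simp; ring

theorem isUnit_det_one_sub_smul_ldirkA {z : ℂ} (hz4 : z ≠ 4) (hz3 : z ≠ 3) :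
    IsUnit (1 - z • ldirkA.map Complex.ofReal).det := by
  rw [det_one_sub_smul_ldirkA, isUnit_iff_ne_zero]
  have h4 : (4 : ℂ) - z ≠ 0 := sub_ne_zero.mpr hz4.symm
  have h3 : (3 : ℂ) - z ≠ 0 := sub_ne_zero.mpr hz3.symm
  exact div_ne_zero (mul_ne_zero (pow_ne_zero 2 h4) h3) (by norm_num)

theorem stabilityFunction_ldirkA {z : ℂ} (hz4 : z ≠ 4) (hz3 : z ≠ 3) :
    stabilityFunction ldirkA (ldirkA 2) z = ldirkR z := by
  have hM := isUnit_det_one_sub_smul_ldirkA hz4 hz3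
  rw [stabilityFunction_row_eq 2 hM, ← one_sub_smul_ldirkA_mulVec hz4 hz3, mulVec_mulVec,
    nonsing_inv_mul _ hM, one_mulVec]
  rfl

theorem normSq_sub_normSq_ldirkR (z : ℂ) :
    Complex.normSq ((4 - z) * (3 - z)) - Complex.normSq (12 + 5 * z) =
      Complex.normSq z ^ 2 - 14 * z.re * Complex.normSq z + 48 * z.re ^ 2 - 288 * z.re := by
  simp only [Complex.normSq_apply, Complex.mul_re, Complex.mul_im, Complex.sub_re, Complex.sub_im,
    Complex.add_re, Complex.add_im, Complex.re_ofNat, Complex.im_ofNat]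
  ring

theorem norm_ldirkR_le_one {z : ℂ} (hz : z.re ≤ 0) : ‖ldirkR z‖ ≤ 1 := by
  have hgap := normSq_sub_normSq_ldirkR z
  have hterms : 0 ≤ Complex.normSq z ^ 2 - 14 * z.re * Complex.normSq z + 48 * z.re ^ 2 -
      288 * z.re := by
    nlinarith [Complex.normSq_nonneg z]
  rw [ldirkR, norm_div]
  apply div_le_one_of_le₀ _ (norm_nonneg _)
  rw [Complex.norm_def, Complex.norm_def]
  exact Real.sqrt_le_sqrt (by linarith)

theorem tendsto_ldirkR_cobounded : Tendsto ldirkR (cobounded ℂ) (𝓝 0) := by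
  set f : ℂ → ℂ := fun w => (12 * w ^ 2 + 5 * w) / ((4 * w - 1) * (3 * w - 1))
  have hf : ContinuousAt f 0 := by
    apply ContinuousAt.div (by fun_prop) (by fun_prop)
    norm_num
  have hf0 : f 0 = 0 := by simp [f]
  rw [← hf0]
  refine (hf.tendsto.comp tendsto_inv₀_cobounded).congr' ?_
  filter_upwards [eventually_ne_cobounded 0, eventually_ne_cobounded 4,
    eventually_ne_cobounded 3] with z hz0 hz4 hz3
  have h4 : (4 : ℂ) - z ≠ 0 := sub_ne_zero.mpr hz4.symm
  have h3 : (3 : ℂ) - z ≠ 0 := sub_ne_zero.mpr hz3.symm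
  simp only [Function.comp, f, ldirkR]
  field_simp

theorem stmt_9 :
    let g : ℝ := 1 - Real.sqrt 2 / 2
    let A : Matrix (Fin 3) (Fin 3) ℝ := !![1/4, 0, 0; 0, 1/4, 0; 1/3, 1/3, 1/3]
    let b : Fin 3 → ℝ := ![1/3, 1/3, 1/3]
    let AC : Matrix (Fin 3) (Fin 3) ℂ := A.map Complex.ofReal
    let bC : Fin 3 → ℂ := fun i => (b i : ℂ)
    let R : ℂ → ℂ := fun z => 1 + z * (bC ⬝ᵥ ((1 - z • AC)⁻¹ *ᵥ 1))
    (∀ z : ℂ, z.re ≤ 0 → IsUnit (1 - z • AC) ∧ ‖R z‖ ≤ 1) ∧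
      b ⬝ᵥ (A⁻¹ *ᵥ 1) = 1 ∧
      Filter.Tendsto R (Filter.comap (fun z : ℂ => ‖z‖) Filter.atTop) (nhds 0) := by
  intro _ A b AC bC R
  have hR : R = stabilityFunction ldirkA (ldirkA 2) := rfl
  refine ⟨fun z hz => ?_, row_dotProduct_inv_mulVec isUnit_det_ldirkA 2 1, ?_⟩
  · have hz4 : z ≠ 4 := by rintro rfl; norm_num at hz
    have hz3 : z ≠ 3 := by rintro rfl; norm_num at hz
    refine ⟨(isUnit_iff_isUnit_det _).mpr (isUnit_det_one_sub_smul_ldirkA hz4 hz3), ?_⟩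
    rw [hR, stabilityFunction_ldirkA hz4 hz3]
    exact norm_ldirkR_le_one hz
  · rw [comap_norm_atTop, hR]
    refine tendsto_ldirkR_cobounded.congr' ?_
    filter_upwards [eventually_ne_cobounded 4, eventually_ne_cobounded 3] with z hz4 hz3
    exact (stabilityFunction_ldirkA hz4 hz3).symm
end

section
/- The implicit embedded method of H-LDIRK2(2,2,2) is A-stable but not L-stable: with A = [[γ,0],[1−2γ,γ]], γ = 1 − √2/2, and embedded weights b̂ = (3/10, 7/10), for every z ∈ ℂ with Re z ≤ 0 the matrix I − zA is invertible and the embedded stability function R̂(z) = 1 + z·b̂ᵀ(I − zA)⁻¹𝟙 satisfies |R̂(z)| ≤ 1; moreover b̂ᵀA⁻¹𝟙 ≠ 1, so R̂(z) does not tend to 0 as |z| → ∞. -/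
/-!
For a lower-triangular `A = !![γ, 0; c, γ]` and weights with `b₁ + b₂ = 1`, forward substitution
gives `R(z) = (1 + (1 - 2γ) z + k z²) / (1 - γ z)²` with `k = γ² - γ + b₂ c`. For `x = Re z ≤ 0`
and `r = |z|²`, the difference `|1 - γ z|⁴ - |1 + (1 - 2γ) z + k z²|²` is a polynomial in `-x ≥ 0`
and `r` whose coefficients are nonnegative as soon as `0 ≤ k ≤ γ²` and `(1 - 2γ)² ≤ 2γ² + 2k`;
for `γ = 1 - √2/2`, `b₂ = 7/10` one finds `k = (√2 - 1)/5`, which satisfies both.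

Since `1 - z A = -z (A - z⁻¹)`, the stability function equals `1 - bᵀ(A - z⁻¹)⁻¹𝟙`, which tends
to `1 - bᵀA⁻¹𝟙 = k/γ² ≠ 0` as `|z| → ∞`.
-/

open Matrix Filter Topology Bornology

variable {K L ι : Type*} [Fintype ι] [DecidableEq ι]

lemma Matrix.inv_smul_of_ne_zero [Field K] (M : Matrix ι ι K) {c : K} (hc : c ≠ 0) :
    (c • M)⁻¹ = c⁻¹ • M⁻¹ := by
  by_cases hM : IsUnit M.det
  · exact inv_smul' M (Units.mk0 c hc) hM
  · have hcM : ¬ IsUnit (c • M).det := by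
      rwa [det_smul, IsUnit.mul_iff, and_iff_right (isUnit_iff_ne_zero.2 (pow_ne_zero _ hc))]
    rw [nonsing_inv_apply_not_isUnit _ hM, nonsing_inv_apply_not_isUnit _ hcM, smul_zero]

lemma Matrix.inv_map [Field K] [Field L] (f : K →+* L) (A : Matrix ι ι K) :
    (A.map f)⁻¹ = A⁻¹.map f := by
  have hdet : (A.map f).det = f A.det := (f.map_det A).symm
  have hadj : (A.map f).adjugate = A.adjugate.map f := (f.map_adjugate A).symm
  rw [inv_def, inv_def, hdet, hadj]
  ext i j
  simp

lemma Matrix.dotProduct_inv_map_mulVec_one [Field K] [Field L] (f : K →+* L)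
    (A : Matrix ι ι K) (b : ι → K) :
    (fun i => f (b i)) ⬝ᵥ ((A.map f)⁻¹ *ᵥ 1) = f (b ⬝ᵥ (A⁻¹ *ᵥ 1)) := by
  simp [inv_map, dotProduct, mulVec, map_sum]

namespace RungeKutta

noncomputable def stabilityFunction [Field K] (A : Matrix ι ι K) (b : ι → K) (z : K) : K :=
  1 + z * (b ⬝ᵥ ((1 - z • A)⁻¹ *ᵥ 1))

lemma stabilityFunction_eq_of_ne_zero [Field K] (A : Matrix ι ι K) (b : ι → K) {z : K}
    (hz : z ≠ 0) :
    stabilityFunction A b z = 1 - b ⬝ᵥ ((A - z⁻¹ • (1 : Matrix ι ι K))⁻¹ *ᵥ 1) := by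
  have hsplit : 1 - z • A = (-z) • (A - z⁻¹ • (1 : Matrix ι ι K)) := by
    rw [smul_sub, smul_smul, neg_mul, mul_inv_cancel₀ hz, neg_smul, neg_smul, one_smul,
      sub_neg_eq_add, neg_add_eq_sub]
  rw [stabilityFunction, hsplit, inv_smul_of_ne_zero _ (neg_ne_zero.2 hz), smul_mulVec,
    dotProduct_smul, smul_eq_mul, inv_neg, neg_mul, mul_neg, mul_inv_cancel_left₀ hz,
    ← sub_eq_add_neg]

lemma tendsto_stabilityFunction_cobounded [NormedField K] (A : Matrix ι ι K) (b : ι → K)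
    (hA : IsUnit A.det) :
    Tendsto (stabilityFunction A b) (cobounded K) (𝓝 (1 - b ⬝ᵥ (A⁻¹ *ᵥ 1))) := by
  set F : K → K := fun w => 1 - b ⬝ᵥ ((A - w • (1 : Matrix ι ι K))⁻¹ *ᵥ 1)
  have hF : ContinuousAt F 0 := by
    have hinv : ContinuousAt Inv.inv (A - (0 : K) • (1 : Matrix ι ι K)) := by
      refine continuousAt_matrix_inv _ ?_
      rw [Ring.inverse_eq_inv']
      exact continuousAt_inv₀ (by simpa using hA.ne_zero)
    have hM : Continuous fun w : K => A - w • (1 : Matrix ι ι K) := by fun_prop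
    have hL : Continuous fun M : Matrix ι ι K => 1 - b ⬝ᵥ (M *ᵥ 1) :=
      continuous_const.sub
        (continuous_const.dotProduct (continuous_id.matrix_mulVec continuous_const))
    exact hL.continuousAt.comp
      (hinv.comp (f := fun w : K => A - w • (1 : Matrix ι ι K)) hM.continuousAt)
  have heq : F ∘ Inv.inv =ᶠ[cobounded K] stabilityFunction A b := by
    filter_upwards [eventually_ne_cobounded 0] with z hz
    exact (stabilityFunction_eq_of_ne_zero A b hz).symm
  simpa [F] using (hF.tendsto.comp tendsto_inv₀_cobounded).congr' heq

lemma not_tendsto_stabilityFunction_map_zero [Field K] [NontriviallyNormedField L]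
    (f : K →+* L) (A : Matrix ι ι K) (b : ι → K) (hA : IsUnit A.det) (hb : b ⬝ᵥ (A⁻¹ *ᵥ 1) ≠ 1) :
    ¬ Tendsto (stabilityFunction (A.map f) (fun i => f (b i))) (cobounded L) (𝓝 0) := by
  intro h
  have hAf : IsUnit (A.map f).det := (f.map_det A) ▸ hA.map f
  have hlim := tendsto_stabilityFunction_cobounded _ (fun i => f (b i)) hAf
  rw [dotProduct_inv_map_mulVec_one, ← map_one f, ← map_sub] at hlim
  have hzero : f (1 - b ⬝ᵥ (A⁻¹ *ᵥ 1)) = f 0 :=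
    (tendsto_nhds_unique hlim h).trans (map_zero f).symm
  exact hb (sub_eq_zero.1 (f.injective hzero)).symm

section LowerTriangular

variable [Field K] (g c : K)

lemma inv_lowerTriangular (hg : g ≠ 0) :
    (!![g, 0; c, g])⁻¹ = !![g⁻¹, 0; -c / g ^ 2, g⁻¹] := by
  refine inv_eq_right_inv ?_
  ext i j
  fin_cases i <;> fin_cases j <;> simp [hg]
  field_simp
  ring

lemma one_sub_smul_lowerTriangular (z : K) :
    1 - z • !![g, 0; c, g] = !![1 - z * g, 0; -(z * c), 1 - z * g] := by
  ext i j
  fin_cases i <;> fin_cases j <;> simp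

lemma isUnit_one_sub_smul_lowerTriangular {z : K} (hz : 1 - z * g ≠ 0) :
    IsUnit (1 - z • !![g, 0; c, g]) := by
  rw [one_sub_smul_lowerTriangular, isUnit_iff_isUnit_det, det_fin_two_of]
  simpa using mul_ne_zero hz hz

lemma stabilityFunction_lowerTriangular (b₁ b₂ : K) {z : K} (hz : 1 - z * g ≠ 0) :
    stabilityFunction !![g, 0; c, g] ![b₁, b₂] z =
      (1 + (b₁ + b₂ - 2 * g) * z + (g ^ 2 - (b₁ + b₂) * g + b₂ * c) * z ^ 2) /
        (1 - z * g) ^ 2 := by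
  rw [stabilityFunction, one_sub_smul_lowerTriangular, inv_lowerTriangular _ _ hz]
  simp [dotProduct, mulVec, Fin.sum_univ_two]
  field_simp
  ring

lemma one_sub_dotProduct_inv_lowerTriangular_mulVec_one (b₁ b₂ : K) (hg : g ≠ 0) :
    1 - ![b₁, b₂] ⬝ᵥ ((!![g, 0; c, g])⁻¹ *ᵥ 1) =
      (g ^ 2 - (b₁ + b₂) * g + b₂ * c) / g ^ 2 := by
  rw [inv_lowerTriangular _ _ hg]
  simp [dotProduct, mulVec, Fin.sum_univ_two]
  field_simp
  ring

end LowerTriangular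

lemma norm_quadratic_le_norm_one_sub_mul_sq {g a k : ℝ} (hg : 0 ≤ g) (ha : 0 ≤ a) (hk : 0 ≤ k)
    (hkg : k ≤ g ^ 2) (hak : a ^ 2 ≤ 2 * g ^ 2 + 2 * k) {z : ℂ} (hz : z.re ≤ 0) :
    ‖1 + a * z + k * z ^ 2‖ ≤ ‖1 - z * g‖ ^ 2 := by
  rw [← sq_le_sq₀ (norm_nonneg _) (by positivity), ← pow_mul, pow_mul, Complex.sq_norm,
    Complex.sq_norm, ← sub_nonneg]
  obtain ⟨x, y⟩ := z
  set r := x ^ 2 + y ^ 2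
  have hdiff : Complex.normSq (1 - ⟨x, y⟩ * g) ^ 2
      - Complex.normSq (1 + a * ⟨x, y⟩ + k * ⟨x, y⟩ ^ 2) =
      (g ^ 2 - k) * (g ^ 2 + k) * r ^ 2 + (-x) * (4 * g ^ 3 + 2 * a * k) * r
        + (2 * g ^ 2 + 2 * k - a ^ 2) * r + 4 * (g ^ 2 - k) * x ^ 2
        + (-x) * (4 * g + 2 * a) := by
    simp [Complex.normSq_apply, pow_two, r]
    ring
  have hx : 0 ≤ -x := neg_nonneg.2 hz
  have hkg' : 0 ≤ g ^ 2 - k := sub_nonneg.2 hkg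
  have hak' : 0 ≤ 2 * g ^ 2 + 2 * k - a ^ 2 := sub_nonneg.2 hak
  rw [hdiff]
  positivity

lemma one_sub_mul_ofReal_ne_zero {g : ℝ} (hg : 0 ≤ g) {z : ℂ} (hz : z.re ≤ 0) :
    1 - z * g ≠ 0 := by
  refine fun h => absurd (congrArg Complex.re h) ?_
  simp only [Complex.sub_re, Complex.one_re, Complex.re_mul_ofReal, Complex.zero_re]
  nlinarith

lemma norm_stabilityFunction_lowerTriangular_le_one {g c b₁ b₂ : ℝ} (hb : b₁ + b₂ = 1)
    (hg : 0 ≤ g) (hg' : 2 * g ≤ 1) (hgc : g - b₂ * c ≤ g ^ 2) (hcg : b₂ * c ≤ g)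
    (hgc' : 1 ≤ 2 * (g + b₂ * c)) {z : ℂ} (hz : z.re ≤ 0) :
    ‖stabilityFunction !![(g : ℂ), 0; (c : ℂ), (g : ℂ)] ![(b₁ : ℂ), (b₂ : ℂ)] z‖ ≤ 1 := by
  have hd := one_sub_mul_ofReal_ne_zero hg hz
  have hbC : (b₁ : ℂ) + b₂ = 1 := by exact_mod_cast hb
  rw [stabilityFunction_lowerTriangular _ _ _ _ hd, norm_div, norm_pow,
    div_le_one (by positivity), hbC]
  refine le_of_eq_of_le ?_ (norm_quadratic_le_norm_one_sub_mul_sq (a := 1 - 2 * g)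
    (k := g ^ 2 - g + b₂ * c) hg (by linarith) (by linarith) (by linarith) (by nlinarith) hz)
  congr 1
  push_cast
  ring

end RungeKutta

open RungeKutta

theorem stmt_12 :
    let g : ℝ := 1 - Real.sqrt 2 / 2
    let A : Matrix (Fin 2) (Fin 2) ℝ := !![g, 0; 1 - 2*g, g]
    let bhat : Fin 2 → ℝ := ![3/10, 7/10]
    let AC : Matrix (Fin 2) (Fin 2) ℂ := A.map Complex.ofReal
    let bC : Fin 2 → ℂ := fun i => (bhat i : ℂ)
    let Rhat : ℂ → ℂ := fun z => 1 + z * (bC ⬝ᵥ ((1 - z • AC)⁻¹ *ᵥ 1))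
    (∀ z : ℂ, z.re ≤ 0 → IsUnit (1 - z • AC) ∧ ‖Rhat z‖ ≤ 1) ∧
      bhat ⬝ᵥ (A⁻¹ *ᵥ 1) ≠ 1 ∧
      ¬ Filter.Tendsto Rhat (Filter.comap (fun w : ℂ => ‖w‖) Filter.atTop) (nhds 0) := by
  intro g A bhat AC bC Rhat
  have hs : Real.sqrt 2 ^ 2 = 2 := Real.sq_sqrt zero_le_two
  have hs₁ : 1 < Real.sqrt 2 := (Real.lt_sqrt zero_le_one).2 (by norm_num)
  have hs₂ : Real.sqrt 2 < 17 / 12 := (Real.sqrt_lt' (by norm_num)).2 (by norm_num)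
  have hg : g = 1 - Real.sqrt 2 / 2 := rfl
  have hg₀ : 0 < g := by linarith
  have hA : IsUnit A.det := by
    simpa [A, det_fin_two_of] using hg₀.ne'
  have hb : bhat ⬝ᵥ (A⁻¹ *ᵥ 1) ≠ 1 := by
    refine (sub_ne_zero.1 ?_).symm
    rw [one_sub_dotProduct_inv_lowerTriangular_mulVec_one _ _ _ _ hg₀.ne']
    refine div_ne_zero (fun hk => ?_) (pow_ne_zero _ hg₀.ne')
    rw [hg] at hk
    linarith
  have hAC : AC = !![(g : ℂ), 0; ((1 - 2 * g : ℝ) : ℂ), (g : ℂ)] := by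
    rw [eta_fin_two AC]; rfl
  have hbC : bC = ![((3 / 10 : ℝ) : ℂ), ((7 / 10 : ℝ) : ℂ)] := by
    ext i; fin_cases i <;> rfl
  refine ⟨fun z hz => ⟨?_, ?_⟩, hb, ?_⟩
  · rw [hAC]
    exact isUnit_one_sub_smul_lowerTriangular _ _ (one_sub_mul_ofReal_ne_zero hg₀.le hz)
  · show ‖stabilityFunction AC bC z‖ ≤ 1
    rw [hAC, hbC]
    exact norm_stabilityFunction_lowerTriangular_le_one (by norm_num) hg₀.le
      (by linarith) (by nlinarith) (by linarith) (by linarith) hz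
  · rw [comap_norm_atTop]
    exact not_tendsto_stabilityFunction_map_zero Complex.ofRealHom A bhat hA hb
end

section
/- The implicit embedded method of SSP-LDIRK2(3,3,2) is A-stable but not L-stable: with A = [[1/4,0,0],[0,1/4,0],[1/3,1/3,1/3]] and embedded weights b̂ = (7/41, 13/33, 589/1353), for every z ∈ ℂ with Re z ≤ 0 the matrix I − zA is invertible and the embedded stability function R̂(z) = 1 + z·b̂ᵀ(I − zA)⁻¹𝟙 satisfies |R̂(z)| ≤ 1; moreover b̂ᵀA⁻¹𝟙 ≠ 1, so R̂(z) does not tend to 0 as |z| → ∞. -/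
/-!
The coefficient matrix is lower triangular, so the stage system `(I - zA) x = 𝟙` is solved by
forward substitution, and the embedded stability function is the rational function
`R̂(z) = (12 + 5z + (414/451) z²) / ((4 - z)(3 - z))`. Expanding `|den|² - |num|²` in `z = x + iy`
gives a sum of terms that are each nonnegative when `x ≤ 0`, hence `|R̂| ≤ 1`. At infinity `R̂`
tends to the quotient of the leading coefficients, `414/451 = 1 - b̂ᵀA⁻¹𝟙 ≠ 0`.
-/

open Matrix Complex Filter Topology Bornology

section StabilityFunction

variable {K n : Type*} [Field K] [Fintype n] [DecidableEq n]

noncomputable def stabilityFun (A : Matrix n n K) (b : n → K) (z : K) : K :=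
  1 + z * (b ⬝ᵥ ((1 - z • A)⁻¹ *ᵥ 1))

theorem Matrix.inv_mulVec_eq_of_mulVec_eq {M : Matrix n n K} (hM : IsUnit M) {x v : n → K}
    (h : M *ᵥ x = v) : M⁻¹ *ᵥ v = x := by
  rw [← h, mulVec_mulVec, nonsing_inv_mul _ ((isUnit_iff_isUnit_det M).mp hM), one_mulVec]

end StabilityFunction

theorem Complex.normSq_add_mul_add_mul_sq (a b c : ℝ) (z : ℂ) :
    normSq (a + b * z + c * z ^ 2) =
      a ^ 2 + 2 * a * b * z.re + 2 * a * c * (z.re ^ 2 - z.im ^ 2) + b ^ 2 * normSq z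
        + 2 * b * c * z.re * normSq z + c ^ 2 * normSq z ^ 2 := by
  simp only [normSq_apply, add_re, add_im, mul_re, mul_im, ofReal_re, ofReal_im, sq]
  ring

theorem tendsto_quadratic_div_quadratic_cobounded {𝕜 : Type*} [NormedField 𝕜]
    (a b c a' b' c' : 𝕜) (hc' : c' ≠ 0) :
    Tendsto (fun z => (a + b * z + c * z ^ 2) / (a' + b' * z + c' * z ^ 2))
      (cobounded 𝕜) (𝓝 (c / c')) := by
  have hcont : ContinuousAt (fun w => (a * w ^ 2 + b * w + c) / (a' * w ^ 2 + b' * w + c')) 0 :=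
    by fun_prop (disch := simpa using hc')
  have hcomp := hcont.tendsto.comp tendsto_inv₀_cobounded
  simp only [ne_eq, OfNat.ofNat_ne_zero, not_false_eq_true, zero_pow, mul_zero, zero_add] at hcomp
  refine hcomp.congr' ((eventually_ne_cobounded 0).mono fun z hz => ?_)
  simp only [Function.comp_apply]
  field_simp

noncomputable def sspA : Matrix (Fin 3) (Fin 3) ℝ := !![1/4, 0, 0; 0, 1/4, 0; 1/3, 1/3, 1/3]

noncomputable def sspBhat : Fin 3 → ℝ := ![7/41, 13/33, 589/1353]

theorem one_sub_smul_map_sspA (z : ℂ) :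
    1 - z • sspA.map ofReal = !![1 - z/4, 0, 0; 0, 1 - z/4, 0; -z/3, -z/3, 1 - z/3] := by
  ext i j
  fin_cases i <;> fin_cases j <;> simp [sspA, one_apply] <;> ring

theorem det_one_sub_smul_map_sspA (z : ℂ) :
    det (1 - z • sspA.map ofReal) = (4 - z) ^ 2 * (3 - z) / 48 := by
  rw [one_sub_smul_map_sspA, det_fin_three]
  simp only [of_apply, cons_val', cons_val_zero, cons_val_fin_one, cons_val_one, cons_val,
    mul_zero, zero_mul, sub_zero, add_zero]
  ring

theorem isUnit_one_sub_smul_map_sspA {z : ℂ} (h4 : z ≠ 4) (h3 : z ≠ 3) :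
    IsUnit (1 - z • sspA.map ofReal) := by
  rw [isUnit_iff_isUnit_det, det_one_sub_smul_map_sspA, isUnit_iff_ne_zero]
  exact div_ne_zero (mul_ne_zero (pow_ne_zero 2 (sub_ne_zero.2 h4.symm)) (sub_ne_zero.2 h3.symm))
    (by norm_num)

theorem stabilityFun_sspA_sspBhat {z : ℂ} (h4 : z ≠ 4) (h3 : z ≠ 3) :
    stabilityFun (sspA.map ofReal) (fun i => (sspBhat i : ℂ)) z =
      (12 + 5 * z + 414/451 * z ^ 2) / (12 - 7 * z + z ^ 2) := by
  have h4' : (4 : ℂ) - z ≠ 0 := sub_ne_zero.2 h4.symm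
  have h3' : (3 : ℂ) - z ≠ 0 := sub_ne_zero.2 h3.symm
  rw [stabilityFun, inv_mulVec_eq_of_mulVec_eq (isUnit_one_sub_smul_map_sspA h4 h3)
    (x := ![4 / (4 - z), 4 / (4 - z), (12 + 5 * z) / ((4 - z) * (3 - z))])]
  · simp only [dotProduct, sspBhat, Fin.sum_univ_three, cons_val_zero, ofReal_div, ofReal_ofNat,
      cons_val_one, cons_val]
    rw [show (12 : ℂ) - 7 * z + z ^ 2 = (4 - z) * (3 - z) by ring]
    field_simp
    ring
  · rw [one_sub_smul_map_sspA]
    ext i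
    fin_cases i <;> simp [mulVec, dotProduct, Fin.sum_univ_three] <;> grind

theorem norm_le_one_of_re_nonpos {z : ℂ} (hz : z.re ≤ 0) :
    ‖(12 + 5 * z + 414/451 * z ^ 2) / (12 - 7 * z + z ^ 2)‖ ≤ 1 := by
  rw [norm_div]
  refine div_le_one_of_le₀ ?_ (norm_nonneg _)
  rw [← sq_le_sq₀ (norm_nonneg _) (norm_nonneg _), Complex.sq_norm, Complex.sq_norm]
  rw [show 12 + 5 * z + 414/451 * z ^ 2 = (12 : ℝ) + (5 : ℝ) * z + (414/451 : ℝ) * z ^ 2 by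
      push_cast; ring,
    show 12 - 7 * z + z ^ 2 = (12 : ℝ) + (-7 : ℝ) * z + (1 : ℝ) * z ^ 2 by push_cast; ring,
    normSq_add_mul_add_mul_sq, normSq_add_mul_add_mul_sq]
  -- `|den|² - |num|² = -288x + (888/451)(x² - y²) + 24|z|² - (10454/451)x|z|² + (32005/203401)|z|⁴`
  have hnormSq : normSq z = z.re ^ 2 + z.im ^ 2 := by rw [normSq_apply]; ring
  linarith [mul_nonneg (neg_nonneg.2 hz) (normSq_nonneg z), sq_nonneg z.re, sq_nonneg z.im,
    sq_nonneg (normSq z)]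

theorem sspA_inv_mulVec_one : sspA⁻¹ *ᵥ 1 = ![4, 4, -5] := by
  refine inv_mulVec_eq_of_mulVec_eq ?_ ?_
  · rw [isUnit_iff_isUnit_det, isUnit_iff_ne_zero]
    simp [sspA, det_fin_three]
  · ext i
    fin_cases i <;> simp [sspA, mulVec, dotProduct, Fin.sum_univ_three]
    norm_num

theorem sspBhat_dotProduct_inv_mulVec_one : sspBhat ⬝ᵥ (sspA⁻¹ *ᵥ 1) = 37/451 := by
  rw [sspA_inv_mulVec_one]
  simp only [sspBhat, dotProduct, Fin.sum_univ_three, cons_val_zero, cons_val_one, cons_val]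
  norm_num

theorem stmt_13 :
    let g : ℝ := 1 - Real.sqrt 2 / 2
    let A : Matrix (Fin 3) (Fin 3) ℝ := !![1/4, 0, 0; 0, 1/4, 0; 1/3, 1/3, 1/3]
    let bhat : Fin 3 → ℝ := ![7/41, 13/33, 589/1353]
    let AC : Matrix (Fin 3) (Fin 3) ℂ := A.map Complex.ofReal
    let bC : Fin 3 → ℂ := fun i => (bhat i : ℂ)
    let Rhat : ℂ → ℂ := fun z => 1 + z * (bC ⬝ᵥ ((1 - z • AC)⁻¹ *ᵥ 1))
    (∀ z : ℂ, z.re ≤ 0 → IsUnit (1 - z • AC) ∧ ‖Rhat z‖ ≤ 1) ∧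
      bhat ⬝ᵥ (A⁻¹ *ᵥ 1) ≠ 1 ∧
      ¬ Filter.Tendsto Rhat (Filter.comap (fun w : ℂ => ‖w‖) Filter.atTop) (nhds 0) := by
  intro _ A bhat AC bC Rhat
  have hRhat {z : ℂ} (h4 : z ≠ 4) (h3 : z ≠ 3) :
      Rhat z = (12 + 5 * z + 414/451 * z ^ 2) / (12 - 7 * z + z ^ 2) :=
    stabilityFun_sspA_sspBhat h4 h3
  refine ⟨fun z hz => ?_, ?_, fun hzero => ?_⟩
  · have h4 : z ≠ 4 := by rintro rfl; norm_num at hz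
    have h3 : z ≠ 3 := by rintro rfl; norm_num at hz
    exact ⟨isUnit_one_sub_smul_map_sspA h4 h3, hRhat h4 h3 ▸ norm_le_one_of_re_nonpos hz⟩
  · change sspBhat ⬝ᵥ (sspA⁻¹ *ᵥ 1) ≠ 1
    rw [sspBhat_dotProduct_inv_mulVec_one]
    norm_num
  · have hlim : Tendsto Rhat (cobounded ℂ) (𝓝 (414/451)) := by
      have h := tendsto_quadratic_div_quadratic_cobounded (12 : ℂ) 5 (414/451) 12 (-7) 1 one_ne_zero
      rw [div_one] at h
      refine h.congr' ?_
      filter_upwards [eventually_ne_cobounded 4, eventually_ne_cobounded 3] with z h4 h3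
      rw [hRhat h4 h3]
      ring
    rw [comap_norm_atTop] at hzero
    exact absurd (tendsto_nhds_unique hlim hzero) (by norm_num)
end
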